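/- Suppose k₁ < k₂ are positive integers, and x_{k_i} = P(n_i) + P(m_i) for i = 1, 2 with 3 ≤ m_i < n_i, where x_k = (δ^k + σ^k)/2 comes from a Pell equation x² - dy² = ±1. Then n₁ < n₂ + 4. -/

import Mathlib

def padovan : ℕ → ℕ
  | 0 => 0
  | 1 => 1
  | 2 => 1
  | n + 3 => padovan (n + 1) + padovan n

/-!
Since `|σ| = 1/δ ≤ 1` and `δ > 2`, the increment `x_{k+1} - x_k = (δ^k (δ - 1) + σ^k (σ - 1)) / 2`
is positive for `k ≥ 1`, so `P(n₁) + P(m₁) = x_{k₁} < x_{k₂} = P(n₂) + P(m₂)`.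
On the other hand `P(n₂) + P(m₂) < P(n₂ + 4)` for `m₂ < n₂`, by unfolding
`P(n + 4) = P(n) + P(n - 1) + P(n + 1)`, so `n₁ ≥ n₂ + 4` would contradict the monotonicity of `P`.
-/

lemma padovan_le_padovan_add_two : ∀ n, padovan n ≤ padovan (n + 2)
  | 0 => Nat.zero_le _
  | n + 1 => Nat.le_add_right (padovan (n + 1)) (padovan n)

lemma padovan_monotone : Monotone padovan := by
  refine monotone_nat_of_le_succ fun n => ?_
  match n with
  | 0 | 1 | 2 => decide
  | n + 3 =>
    show padovan (n + 1) + padovan n ≤ padovan (n + 2) + padovan (n + 1)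
    have := padovan_le_padovan_add_two n
    omega

lemma padovan_add_lt_padovan_add_four {m n : ℕ} (h : m < n) :
    padovan n + padovan m < padovan (n + 4) := by
  obtain ⟨j, rfl⟩ : ∃ j, n = j + 1 := ⟨n - 1, by omega⟩
  have hm : padovan m ≤ padovan j := padovan_monotone (by omega)
  have hpos : 1 ≤ padovan (j + 2) := padovan_monotone (a := 1) (by omega)
  have hunfold : padovan (j + 1 + 4) = padovan (j + 1) + padovan j + padovan (j + 2) := rfl
  omega

lemma abs_le_one_of_mul_eq_one_or_neg_one {δ σ : ℝ} (hδ : 1 ≤ δ)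
    (hσ : δ * σ = 1 ∨ δ * σ = -1) : |σ| ≤ 1 := by
  have h : |δ * σ| = 1 := by rcases hσ with h | h <;> simp [h]
  calc |σ| ≤ δ * |σ| := le_mul_of_one_le_left (abs_nonneg σ) hδ
    _ = |δ * σ| := by rw [abs_mul, abs_of_nonneg (by linarith : (0 : ℝ) ≤ δ)]
    _ = 1 := h

lemma half_pow_add_pow_lt_succ {δ σ : ℝ} (hδ : 2 < δ) (hσ : |σ| ≤ 1) {k : ℕ} (hk : 1 ≤ k) :
    (δ ^ k + σ ^ k) / 2 < (δ ^ (k + 1) + σ ^ (k + 1)) / 2 := by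
  have hδk : 2 < δ ^ k * (δ - 1) :=
    calc (2 : ℝ) < δ * (δ - 1) := by nlinarith
      _ ≤ δ ^ k * (δ - 1) := by
        gcongr
        · linarith
        · exact le_self_pow₀ (by linarith) (by omega)
  have hσk : |σ ^ k * (σ - 1)| ≤ 2 :=
    calc |σ ^ k * (σ - 1)| = |σ| ^ k * |σ - 1| := by rw [abs_mul, abs_pow]
      _ ≤ 1 * (|σ| + 1) := by
        gcongr
        · exact pow_le_one₀ (abs_nonneg σ) hσ
        · exact (abs_sub σ 1).trans_eq (by simp)
      _ ≤ 2 := by linarith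
  have := neg_abs_le (σ ^ k * (σ - 1))
  rw [pow_succ, pow_succ]
  nlinarith

lemma half_pow_add_pow_lt {δ σ : ℝ} (hδ : 2 < δ) (hσ : |σ| ≤ 1) {k₁ k₂ : ℕ} (hk₁ : 1 ≤ k₁)
    (hk : k₁ < k₂) : (δ ^ k₁ + σ ^ k₁) / 2 < (δ ^ k₂ + σ ^ k₂) / 2 :=
  Nat.rel_of_forall_rel_succ_of_le_of_lt (· < ·) (f := fun k => (δ ^ k + σ ^ k) / 2)
    (fun _ hn => half_pow_add_pow_lt_succ hδ hσ hn) hk₁ hk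

theorem pell_padovan_n1_lt_general (δ σ : ℝ)
    (hδ : 1 + Real.sqrt 2 ≤ δ) (hσ : δ * σ = 1 ∨ δ * σ = -1)
    (k₁ k₂ n₁ m₁ n₂ m₂ : ℕ) (hk₁ : 1 ≤ k₁) (hk : k₁ < k₂)
    (hmn₂ : m₂ < n₂)
    (heq₁ : (δ ^ k₁ + σ ^ k₁) / 2 = (padovan n₁ + padovan m₁ : ℝ))
    (heq₂ : (δ ^ k₂ + σ ^ k₂) / 2 = (padovan n₂ + padovan m₂ : ℝ)) :
    n₁ < n₂ + 4 := by
  have hδ2 : 2 < δ := by linarith [Real.one_lt_sqrt_two]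
  have hσ1 : |σ| ≤ 1 := abs_le_one_of_mul_eq_one_or_neg_one (by linarith) hσ
  have hx := half_pow_add_pow_lt hδ2 hσ1 hk₁ hk
  rw [heq₁, heq₂] at hx
  have hsum : padovan n₁ + padovan m₁ < padovan n₂ + padovan m₂ := by exact_mod_cast hx
  by_contra! hn
  have hn₁ : padovan (n₂ + 4) ≤ padovan n₁ := padovan_monotone hn
  have hn₂ := padovan_add_lt_padovan_add_four hmn₂
  omega

theorem pell_padovan_n1_lt (δ σ : ℝ)
    (hδ : 1 + Real.sqrt 2 ≤ δ) (hσ : δ * σ = 1 ∨ δ * σ = -1)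
    (k₁ k₂ n₁ m₁ n₂ m₂ : ℕ) (hk₁ : 1 ≤ k₁) (hk : k₁ < k₂)
    (hm₁ : 3 ≤ m₁) (hmn₁ : m₁ < n₁) (hm₂ : 3 ≤ m₂) (hmn₂ : m₂ < n₂)
    (heq₁ : (δ ^ k₁ + σ ^ k₁) / 2 = (padovan n₁ + padovan m₁ : ℝ))
    (heq₂ : (δ ^ k₂ + σ ^ k₂) / 2 = (padovan n₂ + padovan m₂ : ℝ)) :
    n₁ < n₂ + 4 :=
  pell_padovan_n1_lt_general δ σ hδ hσ k₁ k₂ n₁ m₁ n₂ m₂ hk₁ hk hmn₂ heq₁ heq₂
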